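/- Let n > 1, let i be a positive integer, and let α ∈ F_{2^n} satisfy tr(α + 1) = 0 (equivalently, tr(α) = 0 when n is even, and tr(α) = 1 when n is odd). Then h_α(x) = x + tr(αx + x^{2^i+1}) is an involution on F_{2^n}, i.e., h_α(h_α(x)) = x for all x ∈ F_{2^n}. -/

import Mathlib

/-- The absolute trace from `F_{2^n}` to its prime field, computed inside the field. -/
noncomputable def aTr {K : Type} [CommRing K] (n : ℕ) (x : K) : K :=
  ∑ k ∈ Finset.range n, x ^ 2 ^ k

/-!
The trace is additive, invariant under Frobenius and takes values in `F_2`. Hence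
`f(x) = tr(αx + x^(2^i+1))` satisfies `f(x + 1) = f(x) + tr(α + 1) + tr(x^(2^i) + x) = f(x)`,
so `h_α(x) = x + f(x)` moves `x` by `0` or `1` without changing `f`, and
`h_α(h_α(x)) = x + 2 f(x) = x`.
-/

theorem GaloisField.pow_pow_eq_self (p : ℕ) [Fact p.Prime] (n : ℕ) (x : GaloisField p n) :
    x ^ p ^ n = x := by
  rcases eq_or_ne n 0 with rfl | hn
  · rw [pow_zero, pow_one]
  · have := Fintype.ofFinite (GaloisField p n)
    rw [← GaloisField.card p n hn, Nat.card_eq_fintype_card]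
    exact FiniteField.pow_card x

theorem Function.Periodic.involutive_add {K : Type*} [Ring K] [CharP K 2] {f : K → K}
    (hf : Function.Periodic f 1) (hf01 : ∀ x, f x = 0 ∨ f x = 1) :
    Function.Involutive fun x ↦ x + f x := by
  intro x
  rcases hf01 x with h | h
  · simp only [h, add_zero]
  · simp only [h, hf x, add_assoc, one_add_one_eq_two, CharTwo.two_eq_zero, add_zero]

section Trace

variable {K : Type} [CommRing K] {n : ℕ}

theorem aTr_sq_of_pow_two_pow_eq_self {x : K} (hx : x ^ 2 ^ n = x) :
    aTr n (x ^ 2) = aTr n x := by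
  have hshift : ∀ k, (x ^ 2) ^ 2 ^ k = x ^ 2 ^ (k + 1) := fun k ↦ by
    rw [← pow_mul, pow_succ, mul_comm]
  have h := Finset.sum_range_succ' (fun k ↦ x ^ 2 ^ k) n
  rw [Finset.sum_range_succ, pow_zero, pow_one, hx] at h
  simp only [aTr, hshift]
  exact add_right_cancel h.symm

theorem aTr_pow_two_pow (hK : ∀ x : K, x ^ 2 ^ n = x) (x : K) (i : ℕ) :
    aTr n (x ^ 2 ^ i) = aTr n x := by
  induction i with
  | zero => rw [pow_zero, pow_one]
  | succ i ih => rw [pow_succ, pow_mul, aTr_sq_of_pow_two_pow_eq_self (hK _), ih]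

variable [CharP K 2]

theorem aTr_add (x y : K) : aTr n (x + y) = aTr n x + aTr n y := by
  simp only [aTr, ← Finset.sum_add_distrib, add_pow_char_pow]

theorem aTr_sq (x : K) : aTr n x ^ 2 = aTr n (x ^ 2) := by
  simp only [aTr, sum_pow_char, ← pow_mul, mul_comm]

theorem aTr_eq_zero_or_one [IsDomain K] (hK : ∀ x : K, x ^ 2 ^ n = x) (x : K) :
    aTr n x = 0 ∨ aTr n x = 1 := by
  rw [← IsIdempotentElem.iff_eq_zero_or_one, IsIdempotentElem, ← sq, aTr_sq,
    aTr_sq_of_pow_two_pow_eq_self (hK x)]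

theorem aTr_quadratic_periodic (hK : ∀ x : K, x ^ 2 ^ n = x) {α : K} (hα : aTr n (α + 1) = 0)
    (i : ℕ) : Function.Periodic (fun x ↦ aTr n (α * x + x ^ (2 ^ i + 1))) 1 := by
  intro x
  have hexpand : α * (x + 1) + (x + 1) ^ (2 ^ i + 1)
      = (α * x + x ^ (2 ^ i + 1)) + (α + 1) + (x ^ 2 ^ i + x) := by
    rw [pow_succ, add_pow_char_pow, one_pow]
    ring
  have hfrob : aTr n (x ^ 2 ^ i + x) = 0 := by
    rw [aTr_add, aTr_pow_two_pow hK, ← two_mul, CharTwo.two_eq_zero, zero_mul]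
  simp only [hexpand, aTr_add _ (x ^ 2 ^ i + x), hfrob, aTr_add _ (α + 1), hα, add_zero]

end Trace

theorem stmt17_general (n i : ℕ)
    (α : GaloisField 2 n) (hα : aTr n (α + 1) = 0) :
    ∀ x : GaloisField 2 n,
      ((x + aTr n (α * x + x ^ (2 ^ i + 1))) +
        aTr n (α * (x + aTr n (α * x + x ^ (2 ^ i + 1))) +
          (x + aTr n (α * x + x ^ (2 ^ i + 1))) ^ (2 ^ i + 1))) = x :=
  have hK := GaloisField.pow_pow_eq_self 2 n
  Function.Periodic.involutive_add (aTr_quadratic_periodic hK hα i)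
    fun _ ↦ aTr_eq_zero_or_one hK _

/-- for `n > 1` and `α ∈ F_{2^n}` with `tr(α+1) = 0`, the map
`h_α(x) = x + tr(αx + x^{2^i+1})` is an involution on `F_{2^n}`. -/
theorem stmt17 (n i : ℕ) (hn : 1 < n) (hi : 0 < i)
    (α : GaloisField 2 n) (hα : aTr n (α + 1) = 0) :
    ∀ x : GaloisField 2 n,
      ((x + aTr n (α * x + x ^ (2 ^ i + 1))) +
        aTr n (α * (x + aTr n (α * x + x ^ (2 ^ i + 1))) +
          (x + aTr n (α * x + x ^ (2 ^ i + 1))) ^ (2 ^ i + 1))) = x :=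
  stmt17_general n i α hα
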